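/- On the path space of a symplectic manifold M, the symplectic form ω̃(v₁,v₂)(γ) = ∫₀¹ ω(dev_t v₁, dev_t v₂) dt decomposes as ω̃ = ev_0* ω + dλ, where λ is the globally defined 1-form λ(v)(γ) = ∫₀¹ (∫₀ᵗ ω(γ̇(τ), dev_τ(v)) dτ) dt. -/

import Mathlib

/-- The global 1-form `λ` on path space obtained by integrating the truncated Chen
integral of the constant 2-form `ω` over `t ∈ [0,1]`. -/
noncomputable def pathLambda {V : Type*} [NormedAddCommGroup V] [NormedSpace ℝ V]
    (ω : V →ₗ[ℝ] V →ₗ[ℝ] ℝ) (γ v : ℝ → V) : ℝ :=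
  ∫ t in (0:ℝ)..1, ∫ τ in (0:ℝ)..t, ω (deriv γ τ) (v τ)

section helpers
variable {V : Type*} [NormedAddCommGroup V] [NormedSpace ℝ V] [FiniteDimensional ℝ V]
  (ω : V →ₗ[ℝ] V →ₗ[ℝ] ℝ)

noncomputable def omegaCLM : V →L[ℝ] V →L[ℝ] ℝ :=
  LinearMap.toContinuousLinearMap
    { toFun := fun x => LinearMap.toContinuousLinearMap (ω x),
      map_add' := by intro a b; ext y; simp,
      map_smul' := by intro a b; ext y; simp }

@[simp] lemma omegaCLM_apply (x y : V) : omegaCLM ω x y = ω x y := rfl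

lemma cont_pair {a b : ℝ → V} (ha : Continuous a) (hb : Continuous b) :
    Continuous fun τ => ω (a τ) (b τ) := by
  have : Continuous fun τ => omegaCLM ω (a τ) (b τ) :=
    (((omegaCLM ω).continuous.comp ha)).clm_apply hb
  simpa using this

lemma deriv_lambda (γ v w : ℝ → V)
    (hγ : ContDiff ℝ (⊤ : ℕ∞) γ) (hv : ContDiff ℝ (⊤ : ℕ∞) v) (hw : ContDiff ℝ (⊤ : ℕ∞) w) :
    deriv (fun s : ℝ => pathLambda ω (fun u => γ u + s • v u) w) 0
      = ∫ t in (0:ℝ)..1, ∫ τ in (0:ℝ)..t, ω (deriv v τ) (w τ) := by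
  have hγ' : Continuous (deriv γ) := hγ.continuous_deriv (by simp)
  have hv' : Continuous (deriv v) := hv.continuous_deriv (by simp)
  have hf : Continuous fun τ => ω (deriv γ τ) (w τ) := cont_pair ω hγ' hw.continuous
  have hg : Continuous fun τ => ω (deriv v τ) (w τ) := cont_pair ω hv' hw.continuous
  set A : ℝ := ∫ t in (0:ℝ)..1, ∫ τ in (0:ℝ)..t, ω (deriv γ τ) (w τ) with hA
  set B : ℝ := ∫ t in (0:ℝ)..1, ∫ τ in (0:ℝ)..t, ω (deriv v τ) (w τ) with hB
  have key : (fun s : ℝ => pathLambda ω (fun u => γ u + s • v u) w)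
      = fun s : ℝ => A + s * B := by
    funext s
    have hder : ∀ τ : ℝ, deriv (fun u => γ u + s • v u) τ
        = deriv γ τ + s • deriv v τ := by
      intro τ
      rw [deriv_fun_add (hγ.differentiable (by simp) τ)
        (show DifferentiableAt ℝ (fun u => s • v u) τ from ((hv.differentiable (by simp)).const_smul s) τ)]
      congr 1
      rw [deriv_fun_const_smul s (hv.differentiable (by simp) τ)]
    have inner : ∀ t : ℝ, (∫ τ in (0:ℝ)..t, ω (deriv (fun u => γ u + s • v u) τ) (w τ))
        = (∫ τ in (0:ℝ)..t, ω (deriv γ τ) (w τ)) + s * ∫ τ in (0:ℝ)..t, ω (deriv v τ) (w τ) := by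
      intro t
      have : (fun τ => ω (deriv (fun u => γ u + s • v u) τ) (w τ))
          = fun τ => ω (deriv γ τ) (w τ) + s * ω (deriv v τ) (w τ) := by
        funext τ; rw [hder τ]; simp [map_add, map_smul, smul_eq_mul]
      rw [this, intervalIntegral.integral_add (hf.intervalIntegrable _ _)
        ((hg.intervalIntegrable _ _).const_mul s), intervalIntegral.integral_const_mul]
    unfold pathLambda
    simp_rw [inner]
    have hFint : IntervalIntegrable (fun t => ∫ τ in (0:ℝ)..t, ω (deriv γ τ) (w τ))
        MeasureTheory.volume 0 1 :=
      (intervalIntegral.continuous_primitive (fun a b => hf.intervalIntegrable a b) 0).intervalIntegrable _ _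
    have hGint : IntervalIntegrable (fun t => ∫ τ in (0:ℝ)..t, ω (deriv v τ) (w τ))
        MeasureTheory.volume 0 1 :=
      (intervalIntegral.continuous_primitive (fun a b => hg.intervalIntegrable a b) 0).intervalIntegrable _ _
    rw [intervalIntegral.integral_add hFint (hGint.const_mul s),
      intervalIntegral.integral_const_mul]
  rw [key]
  have : HasDerivAt (fun s : ℝ => A + s * B) B 0 := by
    simpa using ((hasDerivAt_id (0:ℝ)).mul_const B).const_add A
  exact this.deriv

end helpers

theorem path_space_symplectic_decomposition {V : Type*} [NormedAddCommGroup V]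
    [NormedSpace ℝ V] [FiniteDimensional ℝ V]
    (ω : V →ₗ[ℝ] V →ₗ[ℝ] ℝ)
    (hanti : ∀ x y, ω x y = - ω y x)
    (hnondeg : ∀ x, (∀ y, ω x y = 0) → x = 0)
    (γ v₁ v₂ : ℝ → V)
    (hγ : ContDiff ℝ (⊤ : ℕ∞) γ) (hv₁ : ContDiff ℝ (⊤ : ℕ∞) v₁) (hv₂ : ContDiff ℝ (⊤ : ℕ∞) v₂) :
    (∫ t in (0:ℝ)..1, ω (v₁ t) (v₂ t)) =
      ω (v₁ 0) (v₂ 0)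
        + (deriv (fun s : ℝ => pathLambda ω (fun u => γ u + s • v₁ u) v₂) 0
            - deriv (fun s : ℝ => pathLambda ω (fun u => γ u + s • v₂ u) v₁) 0) := by
  rw [deriv_lambda ω γ v₁ v₂ hγ hv₁ hv₂, deriv_lambda ω γ v₂ v₁ hγ hv₂ hv₁]
  have hv₁' : Continuous (deriv v₁) := hv₁.continuous_deriv (by simp)
  have hv₂' : Continuous (deriv v₂) := hv₂.continuous_deriv (by simp)
  have h12 : Continuous fun τ => ω (deriv v₁ τ) (v₂ τ) := cont_pair ω hv₁' hv₂.continuous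
  have h21 : Continuous fun τ => ω (deriv v₂ τ) (v₁ τ) := cont_pair ω hv₂' hv₁.continuous
  set g : ℝ → ℝ := fun τ => ω (v₁ τ) (v₂ τ) with hgdef
  have hgc : Continuous g := cont_pair ω hv₁.continuous hv₂.continuous
  have hgd : ∀ τ : ℝ, HasDerivAt g (ω (deriv v₁ τ) (v₂ τ) + ω (v₁ τ) (deriv v₂ τ)) τ := by
    intro τ
    have h1 : HasDerivAt (fun τ => omegaCLM ω (v₁ τ)) (omegaCLM ω (deriv v₁ τ)) τ :=
      (omegaCLM ω).hasFDerivAt.comp_hasDerivAt τ (hv₁.differentiable (by simp) τ).hasDerivAt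
    have h2 : HasDerivAt v₂ (deriv v₂ τ) τ := (hv₂.differentiable (by simp) τ).hasDerivAt
    have := h1.clm_apply h2
    simpa using this
  have hsum : Continuous fun τ => ω (deriv v₁ τ) (v₂ τ) + ω (v₁ τ) (deriv v₂ τ) :=
    h12.add (cont_pair ω hv₁.continuous hv₂')
  have ftc : ∀ t : ℝ, (∫ τ in (0:ℝ)..t, (ω (deriv v₁ τ) (v₂ τ) + ω (v₁ τ) (deriv v₂ τ)))
      = g t - g 0 := fun t =>
    intervalIntegral.integral_eq_sub_of_hasDerivAt (fun τ _ => hgd τ)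
      (hsum.intervalIntegrable _ _)
  have swap : ∀ τ : ℝ, ω (deriv v₁ τ) (v₂ τ) - ω (deriv v₂ τ) (v₁ τ)
      = ω (deriv v₁ τ) (v₂ τ) + ω (v₁ τ) (deriv v₂ τ) := by
    intro τ; rw [hanti (deriv v₂ τ) (v₁ τ)]; ring
  have inner_eq : ∀ t : ℝ,
      (∫ τ in (0:ℝ)..t, ω (deriv v₁ τ) (v₂ τ)) - (∫ τ in (0:ℝ)..t, ω (deriv v₂ τ) (v₁ τ))
        = g t - g 0 := by
    intro t
    rw [← intervalIntegral.integral_sub (h12.intervalIntegrable _ _)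
      (h21.intervalIntegrable _ _)]
    rw [← ftc t]
    exact intervalIntegral.integral_congr fun τ _ => swap τ
  have hF1 : IntervalIntegrable (fun t => ∫ τ in (0:ℝ)..t, ω (deriv v₁ τ) (v₂ τ))
      MeasureTheory.volume 0 1 :=
    (intervalIntegral.continuous_primitive (fun a b => h12.intervalIntegrable a b) 0).intervalIntegrable _ _
  have hF2 : IntervalIntegrable (fun t => ∫ τ in (0:ℝ)..t, ω (deriv v₂ τ) (v₁ τ))
      MeasureTheory.volume 0 1 :=
    (intervalIntegral.continuous_primitive (fun a b => h21.intervalIntegrable a b) 0).intervalIntegrable _ _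
  have outer : (∫ t in (0:ℝ)..1, ∫ τ in (0:ℝ)..t, ω (deriv v₁ τ) (v₂ τ))
      - (∫ t in (0:ℝ)..1, ∫ τ in (0:ℝ)..t, ω (deriv v₂ τ) (v₁ τ))
      = ∫ t in (0:ℝ)..1, (g t - g 0) := by
    rw [← intervalIntegral.integral_sub hF1 hF2]
    exact intervalIntegral.integral_congr fun t _ => inner_eq t
  rw [outer, intervalIntegral.integral_sub (hgc.intervalIntegrable _ _)
    (intervalIntegrable_const)]
  simp
  simp only [hgdef]
  ring
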